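/- In the setting of the previous bias computation, if additionally η(x)² ≤ η̄² for all x, p(x) ≤ p̄/|X| for all x, and M = Σ_{x∈S} p(x) ≥ p_min·κ for constants p_min, κ > 0, then |E[Δ̂] − Σ_{x∈S} p(x)(φ̄* − φ(x))²| ≤ η̄² p̄² / (|X| p_min κ). -/

import Mathlib

open MeasureTheory ProbabilityTheory Finset

/-
Expanding the square, the corrected loss equals `∑ p φ̂² - T̂² / M - ∑ p η̂²` with
`T̂ = ∑ p φ̂`. Taking expectations, each `E φ̂(x)²` exceeds `φ(x)²` by `η(x)²`, which the
correction `E η̂(x)² = η(x)²` cancels exactly; only `E T̂²` is left over, and by independence it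
exceeds `T²` by `∑ p² η²`. Hence the bias is exactly `-(∑ p² η²) / M`, and the overlap bounds give
`∑ p² η² ≤ |X| (p̄ / |X|)² η̄²` and `M ≥ p_min κ`.
-/

lemma sum_mul_sq_sub_weighted_mean {ι : Type*} (s : Finset ι) (p f : ι → ℝ)
    (hM : ∑ i ∈ s, p i ≠ 0) :
    ∑ i ∈ s, p i * ((∑ j ∈ s, p j * f j) / (∑ j ∈ s, p j) - f i) ^ 2
      = ∑ i ∈ s, p i * f i ^ 2 - (∑ i ∈ s, p i * f i) ^ 2 / ∑ i ∈ s, p i := by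
  set M := ∑ i ∈ s, p i
  set T := ∑ i ∈ s, p i * f i
  have expand : ∀ i ∈ s, p i * (T / M - f i) ^ 2
      = (T / M) ^ 2 * p i - 2 * (T / M) * (p i * f i) + p i * f i ^ 2 := fun i _ => by ring
  rw [sum_congr rfl expand, sum_add_distrib, sum_sub_distrib, ← mul_sum, ← mul_sum]
  field_simp
  ring

section
variable {Ω : Type*} [MeasurableSpace Ω] {μ : Measure Ω} [IsProbabilityMeasure μ]

lemma integral_sq_eq_sq_integral_add_variance {Y : Ω → ℝ} (hY : MemLp Y 2 μ) :
    ∫ ω, Y ω ^ 2 ∂μ = (∫ ω, Y ω ∂μ) ^ 2 + Var[Y; μ] := by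
  rw [variance_eq_sub hY]
  simp

lemma integral_sq_sum_of_pairwise_indepFun {ι : Type*} {s : Finset ι} {Y : ι → Ω → ℝ}
    (c : ι → ℝ) (hY : ∀ i ∈ s, MemLp (Y i) 2 μ)
    (hindep : Set.Pairwise s fun i j => Y i ⟂ᵢ[μ] Y j) :
    ∫ ω, (∑ i ∈ s, c i * Y i ω) ^ 2 ∂μ
      = (∑ i ∈ s, c i * ∫ ω, Y i ω ∂μ) ^ 2 + ∑ i ∈ s, c i ^ 2 * Var[Y i; μ] := by
  have hcY : ∀ i ∈ s, MemLp (c i • Y i) 2 μ := fun i hi => (hY i hi).const_smul (c i)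
  have hsum : (fun ω => ∑ i ∈ s, c i * Y i ω) = ∑ i ∈ s, c i • Y i := by
    ext ω; simp
  have hvar : Var[fun ω => ∑ i ∈ s, c i * Y i ω; μ] = ∑ i ∈ s, c i ^ 2 * Var[Y i; μ] := by
    rw [hsum, IndepFun.variance_sum hcY fun i hi j hj hij =>
      (hindep hi hj hij).comp (measurable_const_mul (c i)) (measurable_const_mul (c j))]
    exact sum_congr rfl fun i _ => variance_smul _ _ _
  have hmem : MemLp (fun ω => ∑ i ∈ s, c i * Y i ω) 2 μ := hsum ▸ memLp_finsetSum' s hcY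
  rw [integral_sq_eq_sq_integral_add_variance hmem, hvar,
    integral_finsetSum _ fun i hi => ((hY i hi).integrable one_le_two).const_mul (c i)]
  simp only [integral_const_mul]

lemma integral_corrected_weighted_dispersion {ι : Type*} {s : Finset ι} (p : ι → ℝ)
    {Y V : ι → Ω → ℝ} (hY : ∀ i ∈ s, MemLp (Y i) 2 μ)
    (hindep : Set.Pairwise s fun i j => Y i ⟂ᵢ[μ] Y j) (hV : ∀ i ∈ s, Integrable (V i) μ)
    (hM : ∑ i ∈ s, p i ≠ 0) :
    ∫ ω, ∑ i ∈ s, p i * (((∑ j ∈ s, p j * Y j ω) / (∑ j ∈ s, p j) - Y i ω) ^ 2 - V i ω) ∂μ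
      = ∑ i ∈ s, p i * ((∑ j ∈ s, p j * ∫ ω, Y j ω ∂μ) / (∑ j ∈ s, p j) - ∫ ω, Y i ω ∂μ) ^ 2
        + ∑ i ∈ s, p i * (Var[Y i; μ] - ∫ ω, V i ω ∂μ)
        - (∑ i ∈ s, p i ^ 2 * Var[Y i; μ]) / ∑ i ∈ s, p i := by
  have expand : ∀ ω, ∑ i ∈ s, p i * (((∑ j ∈ s, p j * Y j ω) / (∑ j ∈ s, p j) - Y i ω) ^ 2
        - V i ω)
      = ∑ i ∈ s, p i * Y i ω ^ 2 - (∑ i ∈ s, p i * Y i ω) ^ 2 / (∑ i ∈ s, p i)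
        - ∑ i ∈ s, p i * V i ω := fun ω => by
    simp only [mul_sub, sum_sub_distrib]
    rw [sum_mul_sq_sub_weighted_mean s p (Y · ω) hM]
  have hY2 : ∀ i ∈ s, Integrable (fun ω => p i * Y i ω ^ 2) μ :=
    fun i hi => (hY i hi).integrable_sq.const_mul (p i)
  have hV' : ∀ i ∈ s, Integrable (fun ω => p i * V i ω) μ := fun i hi => (hV i hi).const_mul (p i)
  have hS2 : Integrable (fun ω => ∑ i ∈ s, p i * Y i ω ^ 2) μ := integrable_finsetSum s hY2
  have hSV : Integrable (fun ω => ∑ i ∈ s, p i * V i ω) μ := integrable_finsetSum s hV'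
  have hT2 : Integrable (fun ω => (∑ i ∈ s, p i * Y i ω) ^ 2 / ∑ i ∈ s, p i) μ :=
    (memLp_finsetSum s fun i hi => (hY i hi).const_mul (p i)).integrable_sq.div_const _
  have hST : Integrable (fun ω => ∑ i ∈ s, p i * Y i ω ^ 2
      - (∑ i ∈ s, p i * Y i ω) ^ 2 / ∑ i ∈ s, p i) μ := hS2.sub hT2
  simp only [expand]
  rw [integral_sub hST hSV, integral_sub hS2 hT2,
    integral_div, integral_sq_sum_of_pairwise_indepFun p hY hindep,
    integral_finsetSum s hY2, integral_finsetSum s hV',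
    sum_mul_sq_sub_weighted_mean s p _ hM]
  have hsq : ∀ i ∈ s, p i * ∫ ω, Y i ω ^ 2 ∂μ
      = p i * (∫ ω, Y i ω ∂μ) ^ 2 + p i * Var[Y i; μ] := fun i hi => by
    rw [integral_sq_eq_sq_integral_add_variance (hY i hi), mul_add]
  simp only [integral_const_mul, sum_congr rfl hsq, mul_sub, sum_add_distrib, sum_sub_distrib]
  ring
end

lemma weighted_sq_sum_div_le {X : Type*} [Fintype X] (S : Finset X) (p w : X → ℝ)
    {wbar pbar m : ℝ} (hp : ∀ x ∈ S, 0 ≤ p x)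
    (hpbar : ∀ x ∈ S, p x ≤ pbar / Fintype.card X) (hw : ∀ x ∈ S, w x ≤ wbar)
    (hw₀ : ∀ x ∈ S, 0 ≤ w x) (hm : 0 < m) (hM : m ≤ ∑ x ∈ S, p x) :
    (∑ x ∈ S, p x ^ 2 * w x) / ∑ x ∈ S, p x
      ≤ wbar * pbar ^ 2 / (Fintype.card X * m) := by
  obtain ⟨x₀, hx₀⟩ := nonempty_of_sum_ne_zero (hm.trans_le hM).ne'
  have hcard : (0 : ℝ) < Fintype.card X := by exact_mod_cast Fintype.card_pos_iff.mpr ⟨x₀⟩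
  have hwbar : 0 ≤ wbar := (hw₀ x₀ hx₀).trans (hw x₀ hx₀)
  have hsum : ∑ x ∈ S, p x ^ 2 * w x ≤ Fintype.card X * ((pbar / Fintype.card X) ^ 2 * wbar) :=
    calc ∑ x ∈ S, p x ^ 2 * w x
        ≤ #S * ((pbar / Fintype.card X) ^ 2 * wbar) := by
          simpa using sum_le_card_nsmul S _ _ fun x hx =>
            mul_le_mul (pow_le_pow_left₀ (hp x hx) (hpbar x hx) 2) (hw x hx) (hw₀ x hx)
              (sq_nonneg _)
      _ ≤ Fintype.card X * ((pbar / Fintype.card X) ^ 2 * wbar) := by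
          gcongr
          exact_mod_cast card_le_univ S
  calc (∑ x ∈ S, p x ^ 2 * w x) / ∑ x ∈ S, p x
      ≤ Fintype.card X * ((pbar / Fintype.card X) ^ 2 * wbar) / m :=
        div_le_div₀ (by positivity) hsum hm hM
    _ = wbar * pbar ^ 2 / (Fintype.card X * m) := by
        field_simp

theorem stmt4_general {X Ω : Type*} [Fintype X] [MeasurableSpace Ω]
    (μ : Measure Ω) [IsProbabilityMeasure μ]
    (p φ η : X → ℝ) (φhat etahat2 : X → Ω → ℝ)
    (ηbar pbar pmin κ : ℝ)
    (hp : ∀ x, 0 ≤ p x)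
    (hmeasφ : ∀ x, Measurable (φhat x))
    (hind : ProbabilityTheory.iIndepFun (β := fun _ : X => ℝ × ℝ)
      (fun x ω => (φhat x ω, etahat2 x ω)) μ)
    (hint2 : ∀ x, Integrable (fun ω => (φhat x ω) ^ 2) μ)
    (hintη : ∀ x, Integrable (etahat2 x) μ)
    (hmean : ∀ x, ∫ ω, φhat x ω ∂μ = φ x)
    (hvar : ∀ x, ∫ ω, (φhat x ω - φ x) ^ 2 ∂μ = (η x) ^ 2)
    (hmeanη : ∀ x, ∫ ω, etahat2 x ω ∂μ = (η x) ^ 2)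
    (hηbar : ∀ x, η x ^ 2 ≤ ηbar ^ 2)
    (hpbar : ∀ x, p x ≤ pbar / (Fintype.card X : ℝ))
    (hpmin : 0 < pmin) (hκ : 0 < κ)
    (S : Finset X) (hMlb : pmin * κ ≤ ∑ x ∈ S, p x) :
    |(∫ ω, (∑ x ∈ S, p x *
        (((∑ y ∈ S, p y * φhat y ω) / (∑ y ∈ S, p y) - φhat x ω) ^ 2
          - etahat2 x ω)) ∂μ)
      - ∑ x ∈ S, p x *
          ((∑ y ∈ S, p y * φ y) / (∑ y ∈ S, p y) - φ x) ^ 2|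
      ≤ ηbar ^ 2 * pbar ^ 2 / ((Fintype.card X : ℝ) * pmin * κ) := by
  have hM : 0 < ∑ x ∈ S, p x := (mul_pos hpmin hκ).trans_le hMlb
  have hL2 : ∀ x ∈ S, MemLp (φhat x) 2 μ := fun x _ =>
    (memLp_two_iff_integrable_sq (hmeasφ x).aestronglyMeasurable).mpr (hint2 x)
  have hindep : Set.Pairwise S fun x y => φhat x ⟂ᵢ[μ] φhat y := fun x _ y _ hxy =>
    (hind.indepFun hxy).comp measurable_fst measurable_fst
  have hVar : ∀ x, Var[φhat x; μ] = η x ^ 2 := fun x => by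
    rw [variance_eq_integral (hmeasφ x).aemeasurable, hmean x, hvar x]
  rw [integral_corrected_weighted_dispersion p hL2 hindep (fun x _ => hintη x) hM.ne']
  simp only [hmean, hVar, hmeanη, sub_self, mul_zero, sum_const_zero, add_zero,
    sub_sub_cancel_left, abs_neg]
  rw [abs_of_nonneg (div_nonneg (sum_nonneg fun _ _ => by positivity) hM.le), mul_assoc]
  exact weighted_sq_sum_div_le S p (η · ^ 2) (fun x _ => hp x) (fun x _ => hpbar x)
    (fun x _ => hηbar x) (fun _ _ => sq_nonneg _) (mul_pos hpmin hκ) hMlb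

/-- Bound on the bias of the variance-corrected within-group loss
under overlap conditions. -/
theorem stmt4 {X Ω : Type*} [Fintype X] [Nonempty X] [MeasurableSpace Ω]
    (μ : Measure Ω) [IsProbabilityMeasure μ]
    (p φ η : X → ℝ) (φhat etahat2 : X → Ω → ℝ)
    (ηbar pbar pmin κ : ℝ)
    (hp : ∀ x, 0 ≤ p x)
    (hmeasφ : ∀ x, Measurable (φhat x))
    (hmeasη : ∀ x, Measurable (etahat2 x))
    (hind : ProbabilityTheory.iIndepFun (β := fun _ : X => ℝ × ℝ)
      (fun x ω => (φhat x ω, etahat2 x ω)) μ)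
    (hint2 : ∀ x, Integrable (fun ω => (φhat x ω) ^ 2) μ)
    (hintη : ∀ x, Integrable (etahat2 x) μ)
    (hmean : ∀ x, ∫ ω, φhat x ω ∂μ = φ x)
    (hvar : ∀ x, ∫ ω, (φhat x ω - φ x) ^ 2 ∂μ = (η x) ^ 2)
    (hmeanη : ∀ x, ∫ ω, etahat2 x ω ∂μ = (η x) ^ 2)
    (hηbar : ∀ x, η x ^ 2 ≤ ηbar ^ 2)
    (hpbar : ∀ x, p x ≤ pbar / (Fintype.card X : ℝ))
    (hpmin : 0 < pmin) (hκ : 0 < κ)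
    (S : Finset X) (hMlb : pmin * κ ≤ ∑ x ∈ S, p x) :
    |(∫ ω, (∑ x ∈ S, p x *
        (((∑ y ∈ S, p y * φhat y ω) / (∑ y ∈ S, p y) - φhat x ω) ^ 2
          - etahat2 x ω)) ∂μ)
      - ∑ x ∈ S, p x *
          ((∑ y ∈ S, p y * φ y) / (∑ y ∈ S, p y) - φ x) ^ 2|
      ≤ ηbar ^ 2 * pbar ^ 2 / ((Fintype.card X : ℝ) * pmin * κ) :=
  stmt4_general μ p φ η φhat etahat2 ηbar pbar pmin κ hp hmeasφ hind hint2 hintη hmean hvar hmeanη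
    hηbar hpbar hpmin hκ S hMlb
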